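/- Let X be a pointed finitely complete category. Then X satisfies the condition that every morphism with zero kernel is a monomorphism if and only if for every object B the kernel functor Ker_B : Pt_X(B) → X reflects terminal objects. -/

import Mathlib

/-!
A point `(A, α, β)` over `B` is terminal exactly when `α` is mono (then `α` is an iso with
inverse `β`), and `Ker α` is terminal exactly when it is zero. So the forward direction is
immediate. Conversely, for `f : A ⟶ B` the kernel pair of `f`, split by the diagonal, is a point
over `A` whose kernel is a base change of `Ker f`, hence zero; it is therefore terminal, so the
projection is an iso and `f` is mono.
-/

open CategoryTheory CategoryTheory.Limits

universe v u

noncomputable section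

variable {C : Type u} [Category.{v} C]

/-- The category of points over `B`: split epimorphisms over `B` with a chosen section. -/
structure Pt (B : C) where
  X : C
  p : X ⟶ B
  s : B ⟶ X
  sec : s ≫ p = 𝟙 B

@[ext]
structure PtHom {B : C} (P Q : Pt B) where
  hom : P.X ⟶ Q.X
  wp : hom ≫ Q.p = P.p
  ws : P.s ≫ hom = Q.s

attribute [simp] Pt.sec PtHom.wp PtHom.ws

instance {B : C} : Category (Pt B) where
  Hom := PtHom
  id P := ⟨𝟙 P.X, by simp, by simp⟩
  comp f g := ⟨f.hom ≫ g.hom, by rw [Category.assoc, g.wp, f.wp],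
    by rw [← Category.assoc, f.ws, g.ws]⟩
  id_comp f := by apply PtHom.ext; exact Category.id_comp f.hom
  comp_id f := by apply PtHom.ext; exact Category.comp_id f.hom
  assoc f g h := by apply PtHom.ext; exact Category.assoc f.hom g.hom h.hom

@[simp] lemma PtHom.comp_hom {B : C} {P Q R : Pt B} (f : P ⟶ Q) (g : Q ⟶ R) :
    (f ≫ g).hom = f.hom ≫ g.hom := rfl

@[simp] lemma PtHom.id_hom {B : C} (P : Pt B) : (𝟙 P : P ⟶ P).hom = 𝟙 P.X := rfl

variable [HasZeroMorphisms C] [HasFiniteLimits C]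

/-- The kernel functor `Pt_C(B) ⥤ C`, sending a point `(A, α, β)` to `Ker α`. -/
def KerF (B : C) : Pt B ⥤ C where
  obj P := kernel P.p
  map {P Q} f := kernel.map P.p Q.p f.hom (𝟙 B) (by simp)
  map_id P := by
    apply equalizer.hom_ext
    simp [kernel.map]
  map_comp f g := by
    apply equalizer.hom_ext
    simp [kernel.map]

namespace Pt

omit [HasZeroMorphisms C] [HasFiniteLimits C]

variable {B : C}

/-- The unique map from `Q` is `Q.p ≫ P.s`. -/
def isTerminalOfMono (P : Pt B) [Mono P.p] : IsTerminal P :=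
  IsTerminal.ofUniqueHom
    (fun Q => ⟨Q.p ≫ P.s, by simp, by rw [← Category.assoc, Q.sec, Category.id_comp]⟩)
    fun Q m => PtHom.ext <| by simp [← cancel_mono P.p]

/-- On a terminal point the endomorphism `P.p ≫ P.s` must be the identity. -/
theorem isIso_p_of_isTerminal (P : Pt B) (hP : IsTerminal P) : IsIso P.p := by
  let e : P ⟶ P := ⟨P.p ≫ P.s, by simp, by rw [← Category.assoc, P.sec, Category.id_comp]⟩
  exact ⟨P.s, congrArg PtHom.hom (hP.hom_ext e (𝟙 P)), P.sec⟩

def kernelPair {X Y : C} (f : X ⟶ Y) [HasPullback f f] : Pt X :=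
  ⟨pullback f f, pullback.fst f f, pullback.diagonal f, pullback.diagonal_fst f⟩

theorem mono_of_isTerminal_kernelPair {X Y : C} (f : X ⟶ Y) [HasPullback f f]
    (h : IsTerminal (kernelPair f)) : Mono f :=
  have : IsIso (pullback.fst f f) := isIso_p_of_isTerminal _ h
  (pullback.diagonal_isKernelPair f).mono_of_isIso_fst

end Pt

theorem isZero_kernel_pullback_fst {X Y Z : C} {g : X ⟶ Z} {f : Y ⟶ Z}
    (hf : IsZero (kernel f)) : IsZero (kernel (pullback.fst g f)) := by
  have hfst : kernel.ι (pullback.fst g f) ≫ pullback.fst g f = 0 := kernel.condition _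
  have hsnd : kernel.ι (pullback.fst g f) ≫ pullback.snd g f = 0 := by
    have hc : (kernel.ι (pullback.fst g f) ≫ pullback.snd g f) ≫ f = 0 := by
      rw [Category.assoc, ← pullback.condition, ← Category.assoc, hfst, zero_comp]
    rw [← kernel.lift_ι f _ hc, hf.eq_of_tgt (kernel.lift f _ hc) 0, zero_comp]
  have hι : kernel.ι (pullback.fst g f) = 0 := pullback.hom_ext (by simp [hfst]) (by simp [hsnd])
  rw [IsZero.iff_id_eq_zero, ← cancel_mono (kernel.ι _), hι, comp_zero, comp_zero]

theorem stmt9 :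
    (∀ {A B : C} (f : A ⟶ B), IsZero (kernel f) → Mono f) ↔
      (∀ (B : C) (P : Pt B), IsTerminal ((KerF B).obj P) → Nonempty (IsTerminal P)) := by
  constructor
  · intro h B P hP
    have : Mono P.p := h P.p hP.isZero
    exact ⟨P.isTerminalOfMono⟩
  · intro h A B f hf
    obtain ⟨hT⟩ := h A (Pt.kernelPair f) (isZero_kernel_pullback_fst hf).isTerminal
    exact Pt.mono_of_isTerminal_kernelPair f hT
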